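/- Assume the weights A are nonnegative and each φ_{i,j} is monotone nondecreasing. Then for all l, u ∈ ℝ^d with l_j ≤ u_j for all j, the alternating corner sum of the MDMA mixture F̂ over the box [l, u] is nonnegative (the d-increasing property of a multivariate CDF): Σ_{s ∈ {0,1}^d} (−1)^{d−|s|} F̂(v(s)) ≥ 0. -/

import Mathlib

/-!
For a product `x ↦ ∏ j, g j (x j)` the alternating corner sum over `[l, u]` factors as
`∏ j, (g j (u j) - g j (l j))`, by expanding this product over the choice of term in each
factor. The corner sum is linear, so for the mixture it is a combination of such products with
weights `A i ≥ 0`, and each factor is nonnegative by monotonicity.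
-/

open Finset

theorem Fintype.prod_sub_eq_sum_bool {ι R : Type*} [Fintype ι] [DecidableEq ι] [CommRing R]
    (f g : ι → R) :
    ∏ j, (f j - g j) =
      ∑ s : ι → Bool, (-1 : R) ^ (Fintype.card ι - #{j | s j = true}) *
        ∏ j, (if s j then f j else g j) := by
  have hterm (j : ι) : f j - g j = ∑ b : Bool, if b then f j else -g j := by
    simp [sub_eq_add_neg]
  simp_rw [hterm, Fintype.prod_sum]
  refine Fintype.sum_congr _ _ fun s => ?_
  have hcard : #{j | ¬s j = true} = Fintype.card ι - #{j | s j = true} := by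
    rw [← card_univ, ← card_filter_add_card_filter_not (s := univ) fun j => s j = true,
      Nat.add_sub_cancel_left]
  rw [prod_ite, prod_ite, ← hcard, prod_neg, mul_left_comm]

theorem sum_corner_prod_eq_prod_sub {ι R : Type*} [Fintype ι] [DecidableEq ι] [CommRing R]
    (g : ι → R → R) (l u : ι → R) :
    ∑ s : ι → Bool, (-1 : R) ^ (Fintype.card ι - #{j | s j = true}) *
        ∏ j, g j (if s j then u j else l j) =
      ∏ j, (g j (u j) - g j (l j)) := by
  rw [Fintype.prod_sub_eq_sum_bool]
  simp only [apply_ite (g _)]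

theorem mdma_d_increasing_general
    (d m : ℕ)
    (φ : Fin m → Fin d → ℝ → ℝ) (A : (Fin d → Fin m) → ℝ)
    (hA : ∀ i, 0 ≤ A i)
    (hφ : ∀ i j, Monotone (φ i j))
    (Fhat : (Fin d → ℝ) → ℝ)
    (hFhat : ∀ x : Fin d → ℝ, Fhat x = ∑ i : Fin d → Fin m, A i * ∏ j, φ (i j) j (x j))
    (l u : Fin d → ℝ) (hlu : ∀ j, l j ≤ u j) :
    0 ≤ ∑ s : Fin d → Bool,
          (-1 : ℝ) ^ (d - (Finset.univ.filter fun j => s j = true).card)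
            * Fhat (fun j => if s j then u j else l j) := by
  have hmixture : ∑ s : Fin d → Bool,
        (-1 : ℝ) ^ (d - (Finset.univ.filter fun j => s j = true).card)
          * Fhat (fun j => if s j then u j else l j)
      = ∑ i : Fin d → Fin m, A i * ∏ j, (φ (i j) j (u j) - φ (i j) j (l j)) := by
    simp only [hFhat, mul_sum]
    rw [sum_comm]
    refine sum_congr rfl fun i _ => ?_
    rw [← sum_corner_prod_eq_prod_sub (fun j => φ (i j) j), Fintype.card_fin, mul_sum]
    exact sum_congr rfl fun s _ => mul_left_comm _ _ _
  rw [hmixture]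
  exact sum_nonneg fun i _ => mul_nonneg (hA i) <|
    prod_nonneg fun j _ => sub_nonneg.2 (hφ (i j) j (hlu j))

/-- The d-increasing property: with nonnegative weights and monotone univariate CDFs,
the alternating corner sum of the MDMA mixture over any box `[l, u]` is nonnegative. -/
theorem mdma_d_increasing
    (d m : ℕ) (hd : 1 ≤ d) (hm : 1 ≤ m)
    (φ : Fin m → Fin d → ℝ → ℝ) (A : (Fin d → Fin m) → ℝ)
    (hA : ∀ i, 0 ≤ A i)
    (hφ : ∀ i j, Monotone (φ i j))
    (Fhat : (Fin d → ℝ) → ℝ)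
    (hFhat : ∀ x : Fin d → ℝ, Fhat x = ∑ i : Fin d → Fin m, A i * ∏ j, φ (i j) j (x j))
    (l u : Fin d → ℝ) (hlu : ∀ j, l j ≤ u j) :
    0 ≤ ∑ s : Fin d → Bool,
          (-1 : ℝ) ^ (d - (Finset.univ.filter fun j => s j = true).card)
            * Fhat (fun j => if s j then u j else l j) :=
  mdma_d_increasing_general d m φ A hA hφ Fhat hFhat l u hlu
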